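/- With the setup of the starting system Q(λ,x) = ((λ-μ_1)(x_1^{m-1}-β_1), ..., (λ-μ_n)(x_n^{m-1}-β_n), c_1x_1+···+c_nx_n+d), let (λ*, x*) be a solution with λ* = μ_i, (x_j*)^{m-1} = β_j for all j ≠ i, and c·x* + d = 0. Assume μ_i ≠ μ_j for j ≠ i, β_j ≠ 0, c_i ≠ 0, x_i* ≠ 0, and (x_i*)^{m-1} ≠ β_i. Then the Jacobian matrix DQ(λ*, x*) of Q with respect to (λ, x_1,...,x_n) is nonsingular; in fact det DQ(λ*,x*) = (-1)^{i+1} A_i* (-1)^{n+i} c_i ∏_{j≠i} B_j* ≠ 0, where A_i* = (x_i*)^{m-1} - β_i and B_j* = (μ_i - μ_j)(m-1)(x_j*)^{m-2}. -/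

import Mathlib

open Finset

/-!
At a starting solution every equation `j ≠ i` has `x_j^{m-1} - β_j = 0`, so the `λ`-column of
the Jacobian has a single nonzero entry `A_i`, in row `i`. Exchanging that row with the row of
the hyperplane `c·x + d` makes the Jacobian block upper triangular with blocks `A_i` and
`diag(B)` with its `i`-th row replaced by `c`; by Cramer's rule the latter has determinant
`c_i ∏_{j≠i} B_j`, and every factor is nonzero.
-/

namespace Matrix

variable {ι R : Type*} [Fintype ι] [DecidableEq ι] [CommRing R]

theorem det_updateRow_diagonal (B c : ι → R) (i : ι) :
    ((diagonal B).updateRow i c).det = c i * ∏ j ∈ univ.erase i, B j := by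
  rw [← det_transpose, ← updateCol_transpose, diagonal_transpose, ← cramer_apply,
    cramer_eq_adjugate_mulVec, adjugate_diagonal, mulVec_diagonal, mul_comm]

theorem det_fromBlocks_zero_replicateRow_replicateCol_of_eq_zero (B c a : ι → R) (i : ι)
    (ha : ∀ j ≠ i, a j = 0) :
    (fromBlocks 0 (replicateRow Unit c) (replicateCol Unit a) (diagonal B)).det =
      -(a i * c i * ∏ j ∈ univ.erase i, B j) := by
  set M : Matrix (Unit ⊕ ι) (Unit ⊕ ι) R :=
    fromBlocks 0 (replicateRow Unit c) (replicateCol Unit a) (diagonal B)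
  set σ : Equiv.Perm (Unit ⊕ ι) := Equiv.swap (Sum.inl ()) (Sum.inr i)
  have hswap : M.submatrix σ id =
      fromBlocks (of fun _ _ => a i) (of fun _ k => diagonal B i k) 0
        ((diagonal B).updateRow i c) := by
    ext (_ | j) (_ | k)
    · simp [M, σ]
    · simp [M, σ]
    · by_cases hj : j = i
      · subst hj; simp [M, σ]
      · simp [M, σ, Equiv.swap_apply_of_ne_of_ne, hj, ha j hj]
    · by_cases hj : j = i
      · subst hj; simp [M, σ]
      · simp [M, σ, Equiv.swap_apply_of_ne_of_ne, hj]
  have hsign : Equiv.Perm.sign σ = -1 := Equiv.Perm.sign_swap Sum.inl_ne_inr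
  have h := det_permute σ M
  rw [hswap, hsign, det_fromBlocks_zero₂₁, det_unique, of_apply, det_updateRow_diagonal] at h
  linear_combination (norm := (push_cast; ring)) h

end Matrix

open Matrix

theorem starting_system_jacobian_nonsingular {n m : ℕ} (hm : 3 ≤ m)
    (μ β c : Fin n → ℂ) (i : Fin n) (lam : ℂ) (x : Fin n → ℂ)
    (hlam : lam = μ i)
    (hroot : ∀ j, j ≠ i → x j ^ (m - 1) = β j)
    (hμ : ∀ j, j ≠ i → μ i ≠ μ j)
    (hci : c i ≠ 0)
    (hAi : x i ^ (m - 1) ≠ β i)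
    (hxj : ∀ j, j ≠ i → x j ≠ 0) :
    -- the Jacobian matrix `DQ(λ*, x*)`, rows = equations, columns = (λ, x₁,…,xₙ)
    (Matrix.det (Matrix.of (fun r s : Unit ⊕ Fin n =>
      match r, s with
      | Sum.inr j, Sum.inl _ => x j ^ (m - 1) - β j
      | Sum.inr j, Sum.inr k =>
          if k = j then (lam - μ j) * (m - 1) * x j ^ (m - 2) else 0
      | Sum.inl _, Sum.inl _ => 0
      | Sum.inl _, Sum.inr k => c k)) ≠ 0) ∧
    ∃ ε : ℂ, (ε = 1 ∨ ε = -1) ∧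
      Matrix.det (Matrix.of (fun r s : Unit ⊕ Fin n =>
        match r, s with
        | Sum.inr j, Sum.inl _ => x j ^ (m - 1) - β j
        | Sum.inr j, Sum.inr k =>
            if k = j then (lam - μ j) * (m - 1) * x j ^ (m - 2) else 0
        | Sum.inl _, Sum.inl _ => 0
        | Sum.inl _, Sum.inr k => c k))
      = ε * (x i ^ (m - 1) - β i) * c i *
          ∏ j ∈ Finset.univ.erase i, (μ i - μ j) * (m - 1) * x j ^ (m - 2) := by
  subst hlam
  set B : Fin n → ℂ := fun j => (μ i - μ j) * (m - 1) * x j ^ (m - 2)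
  rw [show Matrix.of _ = fromBlocks 0 (replicateRow Unit c)
      (replicateCol Unit fun j => x j ^ (m - 1) - β j) (diagonal B) from ?jacobian,
    det_fromBlocks_zero_replicateRow_replicateCol_of_eq_zero _ _ _ i
      fun j hj => sub_eq_zero.mpr (hroot j hj)]
  case jacobian =>
    ext (_ | j) (_ | k) <;> simp [B, diagonal_apply, eq_comm]
  have hm1 : (m : ℂ) - 1 ≠ 0 := sub_ne_zero.mpr (Nat.cast_ne_one.mpr (by omega))
  have hB : ∀ j ∈ univ.erase i, B j ≠ 0 := fun j hj =>
    have hji := (mem_erase.mp hj).1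
    mul_ne_zero (mul_ne_zero (sub_ne_zero.mpr (hμ j hji)) hm1) (pow_ne_zero _ (hxj j hji))
  refine ⟨?_, -1, Or.inr rfl, by ring⟩
  exact neg_ne_zero.mpr (mul_ne_zero (mul_ne_zero (sub_ne_zero.mpr hAi) hci)
    (prod_ne_zero_iff.mpr hB))
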